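/- arXiv:2410.09588 — 4 statements merged into one kernel-verified Lean document; each statement's English description precedes it below -/
import Mathlib

section
/- Let I be a nonempty finite set of players, and for each player i let A_i be a nonempty finite action set and u_i : (∏_{j∈I} A_j) → ℝ a utility function. A mixed strategy profile s* (assigning to each player i a function s*_i : A_i → ℝ with s*_i(a) ≥ 0 for all a and ∑_{a∈A_i} s*_i(a) = 1) is a Nash equilibrium if and only if for every player i: (1) U_i([a_i, s*_{-i}]) = U_i([b_i, s*_{-i}]) for all a_i, b_i in the support δ(s*_i), and (2) U_i([a_i, s*_{-i}]) ≥ U_i([b_i, s*_{-i}]) for all a_i ∈ δ(s*_i) and all b_i ∉ δ(s*_i). -/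
open Finset

/-- Expected utility of player `i` for the mixed strategy profile `s` in a finite game
with utilities `u`. -/
noncomputable def expUtil {I : Type*} [Fintype I] [DecidableEq I]
    {A : I → Type*} [∀ i, Fintype (A i)]
    (u : I → (∀ j, A j) → ℝ) (s : ∀ i, A i → ℝ) (i : I) : ℝ :=
  ∑ a : ∀ j, A j, (∏ j, s j (a j)) * u i a

/-- The profile `[a, s_{-i}]`: player `i` plays the Dirac strategy at `a`, others play `s`. -/
noncomputable def pureAt {I : Type*} [DecidableEq I]
    {A : I → Type*} [∀ i, DecidableEq (A i)]
    (s : ∀ i, A i → ℝ) (i : I) (a : A i) : ∀ j, A j → ℝ :=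
  Function.update s i (fun b => if b = a then (1 : ℝ) else 0)

lemma expand_aux {I : Type*} [Fintype I] [DecidableEq I]
    {A : I → Type*} [∀ i, Fintype (A i)] [∀ i, DecidableEq (A i)]
    (u : I → (∀ j, A j) → ℝ) (s : ∀ i, A i → ℝ) (i : I) (t : A i → ℝ) :
    expUtil u (Function.update s i t) i
      = ∑ b : A i, t b * expUtil u (pureAt s i b) i := by
  unfold expUtil pureAt
  have hp : ∀ (w : A i → ℝ) (a : ∀ j, A j),
      (∏ j, Function.update s i w j (a j))
        = w (a i) * ∏ j ∈ univ.erase i, s j (a j) := by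
    intro w a
    rw [← Finset.mul_prod_erase univ _ (mem_univ i)]
    congr 1
    · simp
    · exact Finset.prod_congr rfl (fun j hj => by
        rw [Function.update_of_ne (Finset.ne_of_mem_erase hj)])
  simp only [hp, Finset.mul_sum]
  rw [Finset.sum_comm]
  refine Finset.sum_congr rfl (fun a _ => ?_)
  simp [mul_assoc, mul_comm, mul_left_comm]

/-- A mixed strategy profile `s*` of a finite game is a Nash equilibrium if and only if,
for every player `i`: (1) the expected utilities of all pure strategies in the support of
`s*_i` (played against `s*_{-i}`) coincide, and (2) the expected utility of any pure strategy
in the support is at least that of any pure strategy outside the support. -/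
theorem nash_equilibrium_characterization
    {I : Type*} [Fintype I] [DecidableEq I] [Nonempty I]
    {A : I → Type*} [∀ i, Fintype (A i)] [∀ i, DecidableEq (A i)] [∀ i, Nonempty (A i)]
    (u : I → (∀ j, A j) → ℝ) (s : ∀ i, A i → ℝ)
    (hpos : ∀ i a, 0 ≤ s i a) (hsum : ∀ i, ∑ a, s i a = 1) :
    (∀ i, ∀ t : A i → ℝ, (∀ a, 0 ≤ t a) → (∑ a, t a = 1) →
        expUtil u (Function.update s i t) i ≤ expUtil u s i)
    ↔
    (∀ i, (∀ a b : A i, 0 < s i a → 0 < s i b →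
            expUtil u (pureAt s i a) i = expUtil u (pureAt s i b) i) ∧
          (∀ a b : A i, 0 < s i a → ¬ 0 < s i b →
            expUtil u (pureAt s i b) i ≤ expUtil u (pureAt s i a) i)) := by
  have hself : ∀ i, expUtil u s i = ∑ b : A i, s i b * expUtil u (pureAt s i b) i := by
    intro i
    rw [← expand_aux u s i (s i), Function.update_eq_self]
  constructor
  · intro hne i
    set F : A i → ℝ := fun b => expUtil u (pureAt s i b) i with hF
    set V : ℝ := expUtil u s i with hV
    have hFb : ∀ b, F b ≤ V := by
      intro b
      have h1 := hne i (fun c => if c = b then (1:ℝ) else 0)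
        (fun a => by positivity) (by simp)
      rwa [show Function.update s i (fun c => if c = b then (1:ℝ) else 0) = pureAt s i b
        from rfl] at h1
    have hVs : V = ∑ b, s i b * F b := hself i
    have hzero : ∑ b, s i b * (V - F b) = 0 := by
      have h2 : ∑ b, s i b * (V - F b) = (∑ b, s i b) * V - ∑ b, s i b * F b := by
        rw [Finset.sum_mul, ← Finset.sum_sub_distrib]
        exact Finset.sum_congr rfl (fun b _ => by ring)
      rw [h2, hsum i, one_mul, ← hVs]; ring
    have hterm := (Finset.sum_eq_zero_iff_of_nonneg
      (fun b _ => mul_nonneg (hpos i b) (sub_nonneg.2 (hFb b)))).1 hzero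
    have hsupp : ∀ a, 0 < s i a → F a = V := by
      intro a ha
      have := hterm a (mem_univ a)
      have h3 : V - F a = 0 := by
        rcases mul_eq_zero.1 this with h | h
        · exact absurd h (ne_of_gt ha)
        · exact h
      linarith
    exact ⟨fun a b ha hb => by rw [show expUtil u (pureAt s i a) i = F a from rfl,
        show expUtil u (pureAt s i b) i = F b from rfl, hsupp a ha, hsupp b hb],
      fun a b ha hb => by
        rw [show expUtil u (pureAt s i a) i = F a from rfl, hsupp a ha]
        exact hFb b⟩
  · intro h i t ht hts
    obtain ⟨heq, hge⟩ := h i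
    set F : A i → ℝ := fun b => expUtil u (pureAt s i b) i with hF
    obtain ⟨a0, ha0⟩ : ∃ a0, 0 < s i a0 := by
      by_contra hc
      push_neg at hc
      have : ∑ a, s i a = 0 :=
        Finset.sum_eq_zero (fun a _ => le_antisymm (hc a) (hpos i a))
      rw [hsum i] at this; norm_num at this
    have hle : ∀ b, F b ≤ F a0 := by
      intro b
      by_cases hb : 0 < s i b
      · exact (heq b a0 hb ha0).le
      · exact hge a0 b ha0 hb
    have h1 : expUtil u (Function.update s i t) i ≤ F a0 := by
      rw [expand_aux]
      calc ∑ b, t b * F b ≤ ∑ b, t b * F a0 :=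
            Finset.sum_le_sum (fun b _ => mul_le_mul_of_nonneg_left (hle b) (ht b))
        _ = F a0 := by rw [← Finset.sum_mul, hts, one_mul]
    have h2 : expUtil u s i = F a0 := by
      rw [hself i]
      have : ∀ b ∈ univ, s i b * F b = s i b * F a0 := by
        intro b _
        by_cases hb : 0 < s i b
        · simp only [hF]; rw [heq b a0 hb ha0]
        · have : s i b = 0 := le_antisymm (not_lt.1 hb) (hpos i b)
          rw [this, zero_mul, zero_mul]
      rw [Finset.sum_congr rfl this, ← Finset.sum_mul, hsum i, one_mul]
    rw [h2]; exact h1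
end

section
/- Let M ≥ 1 and define Λ_k = C(M,k)/(2^M − 1) for k ∈ {1,…,M}. Then (Λ_k) is a probability vector, and it makes every pure strategy indifferent against it: for every i ∈ {1,…,M}, ∑_{j=1}^{M} Λ_j · E([i,j]) = 2 − 2/(2^M − 1), a value independent of i. -/
open Finset

/-- Success probability of a user in the two-user random access game on a frame of `M`
slots when the two users transmit `i` and `j` repetitions respectively. -/
noncomputable def psucc (M i j : ℕ) : ℝ :=
  if i = j then 1 - 1 / (M.choose i : ℝ) else 1

/-- Expected sum of successful users (ESU) for the pure strategy profile `[i, j]`. -/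
noncomputable def ESU (M i j : ℕ) : ℝ := psucc M i j + psucc M j i

/-- The degree distribution `Λ_k = C(M,k)/(2^M − 1)`, `k ∈ {1,…,M}`, is a probability
vector, and it makes every pure strategy indifferent against it: for every
`i ∈ {1,…,M}`, `∑_{j=1}^M Λ_j · E([i,j]) = 2 − 2/(2^M − 1)`, independently of `i`. -/
theorem equilibrium_distribution_indifference (M : ℕ) (hM : 1 ≤ M) :
    (∀ k ∈ Finset.Icc 1 M, 0 ≤ (M.choose k : ℝ) / (2 ^ M - 1))
    ∧ (∑ k ∈ Finset.Icc 1 M, (M.choose k : ℝ) / (2 ^ M - 1) = 1)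
    ∧ (∀ i ∈ Finset.Icc 1 M,
        ∑ j ∈ Finset.Icc 1 M, (M.choose j : ℝ) / (2 ^ M - 1) * ESU M i j
          = 2 - 2 / (2 ^ M - 1)) := by
  have hS : (0:ℝ) < 2 ^ M - 1 := by
    have h2 : (2:ℝ) ^ 1 ≤ 2 ^ M := pow_le_pow_right₀ (by norm_num) hM
    rw [pow_one] at h2; linarith
  have hrange : Finset.range (M + 1) = insert 0 (Finset.Icc 1 M) := by
    ext x; simp; omega
  have hsum : ∑ k ∈ Finset.Icc 1 M, (M.choose k : ℝ) = 2 ^ M - 1 := by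
    have h0 : ∑ k ∈ Finset.range (M + 1), (M.choose k : ℝ) = 2 ^ M := by
      have := Nat.sum_range_choose M
      have := congrArg (fun n : ℕ => (n : ℝ)) this
      push_cast at this
      simpa using this
    rw [hrange, Finset.sum_insert (by simp)] at h0
    simp at h0
    linarith
  have hΛ : ∑ k ∈ Finset.Icc 1 M, (M.choose k : ℝ) / (2 ^ M - 1) = 1 := by
    rw [← Finset.sum_div, hsum, div_self hS.ne']
  refine ⟨fun k _ => by positivity, hΛ, fun i hi => ?_⟩
  have hiM : 1 ≤ i ∧ i ≤ M := by simpa using hi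
  have hC : (0:ℝ) < (M.choose i : ℝ) := by
    exact_mod_cast Nat.choose_pos hiM.2
  have hE : ∀ j, ESU M i j = 2 - (if j = i then 2 / (M.choose i : ℝ) else 0) := by
    intro j
    unfold ESU psucc
    by_cases h : i = j
    · subst h; simp; ring
    · simp [h, Ne.symm h]; norm_num
  calc ∑ j ∈ Finset.Icc 1 M, (M.choose j : ℝ) / (2 ^ M - 1) * ESU M i j
      = ∑ j ∈ Finset.Icc 1 M, ((M.choose j : ℝ) / (2 ^ M - 1) * 2
          - (if j = i then (M.choose j : ℝ) / (2 ^ M - 1) * (2 / (M.choose i : ℝ)) else 0)) := by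
        refine Finset.sum_congr rfl fun j _ => ?_
        rw [hE j]
        by_cases h : j = i <;> simp [h] <;> ring
    _ = (∑ j ∈ Finset.Icc 1 M, (M.choose j : ℝ) / (2 ^ M - 1)) * 2
          - (M.choose i : ℝ) / (2 ^ M - 1) * (2 / (M.choose i : ℝ)) := by
        rw [Finset.sum_sub_distrib, Finset.sum_ite_eq' _ i
          (fun j => (M.choose j : ℝ) / (2 ^ M - 1) * (2 / (M.choose i : ℝ))), if_pos hi,
          Finset.sum_mul]
    _ = 2 - 2 / (2 ^ M - 1) := by
        rw [hΛ]
        field_simp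
end

section
/- Let M ≥ 1 and let Λ be a probability vector on {1,…,M} such that the map i ↦ ∑_{j=1}^{M} Λ_j · E([i,j]) is constant on {1,…,M}. Then Λ is uniquely determined: Λ_k = C(M,k)/(2^M − 1) for every k ∈ {1,…,M}. -/
open Finset

lemma ESU_eq (M i j : ℕ) :
    ESU M i j = 2 - (if j = i then 2 / (M.choose i : ℝ) else 0) := by
  unfold ESU psucc
  by_cases h : i = j
  · subst h; simp; ring
  · simp [h, Ne.symm h]; norm_num

lemma sum_ESU (M : ℕ) (Λ : ℕ → ℝ) (i : ℕ) (hi : i ∈ Finset.Icc 1 M) :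
    ∑ j ∈ Finset.Icc 1 M, Λ j * ESU M i j
      = (∑ j ∈ Finset.Icc 1 M, Λ j) * 2 - 2 * Λ i / (M.choose i : ℝ) := by
  have : ∀ j ∈ Finset.Icc 1 M, Λ j * ESU M i j
      = Λ j * 2 - (if j = i then 2 * Λ i / (M.choose i : ℝ) else 0) := by
    intro j hj
    rw [ESU_eq]
    by_cases h : j = i
    · subst h; simp; ring
    · simp [h]
  rw [Finset.sum_congr rfl this, Finset.sum_sub_distrib, Finset.sum_ite_eq' _ i, if_pos hi,
    ← Finset.sum_mul]

lemma sum_choose_Icc (M : ℕ) (hM : 1 ≤ M) :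
    ∑ j ∈ Finset.Icc 1 M, ((M.choose j : ℝ)) = 2 ^ M - 1 := by
  have h : Finset.Icc 1 M = Finset.range (M + 1) \ {0} := by
    ext x
    simp [Nat.lt_succ_iff, Nat.one_le_iff_ne_zero]
    tauto
  rw [h, Finset.sum_sdiff_eq_sub (by simp)]
  have := Nat.sum_range_choose M
  have : ∑ j ∈ Finset.range (M + 1), ((M.choose j : ℝ)) = 2 ^ M := by
    exact_mod_cast congrArg (Nat.cast : ℕ → ℝ) this
  rw [this]; simp

/-- Uniqueness of the indifferent mixed strategy: if a probability vector `Λ` on `{1,…,M}`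
makes the map `i ↦ ∑_{j=1}^M Λ_j · E([i,j])` constant on `{1,…,M}`, then
`Λ_k = C(M,k)/(2^M − 1)` for every `k ∈ {1,…,M}`. -/
theorem indifferent_distribution_unique (M : ℕ) (hM : 1 ≤ M) (Λ : ℕ → ℝ)
    (hpos : ∀ k ∈ Finset.Icc 1 M, 0 ≤ Λ k)
    (hsum : ∑ k ∈ Finset.Icc 1 M, Λ k = 1)
    (hconst : ∀ i ∈ Finset.Icc 1 M, ∀ i' ∈ Finset.Icc 1 M,
        ∑ j ∈ Finset.Icc 1 M, Λ j * ESU M i j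
          = ∑ j ∈ Finset.Icc 1 M, Λ j * ESU M i' j) :
    ∀ k ∈ Finset.Icc 1 M, Λ k = (M.choose k : ℝ) / (2 ^ M - 1) := by
  intro k hk
  -- choose pos : for i ∈ Icc 1 M, choose M i > 0
  have hchoose : ∀ i ∈ Finset.Icc 1 M, (0 : ℝ) < (M.choose i : ℝ) := by
    intro i hi
    simp only [Finset.mem_Icc] at hi
    exact_mod_cast Nat.choose_pos hi.2
  -- ratio constant
  have hratio : ∀ i ∈ Finset.Icc 1 M, Λ i / (M.choose i : ℝ) = Λ k / (M.choose k : ℝ) := by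
    intro i hi
    have := hconst i hi k hk
    rw [sum_ESU M Λ i hi, sum_ESU M Λ k hk] at this
    have h2 : 2 * Λ i / (M.choose i : ℝ) = 2 * Λ k / (M.choose k : ℝ) := by linarith
    have hi' := hchoose i hi
    have hk' := hchoose k hk
    field_simp at h2 ⊢
    linarith
  -- so Λ i = (Λ k / C(M,k)) * C(M,i)
  set c := Λ k / (M.choose k : ℝ) with hc
  have hΛ : ∀ i ∈ Finset.Icc 1 M, Λ i = c * (M.choose i : ℝ) := by
    intro i hi
    have hi' := hchoose i hi
    have := hratio i hi
    rw [div_eq_iff (ne_of_gt hi')] at this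
    linarith
  have hsum2 : c * (2 ^ M - 1) = 1 := by
    have h1 : ∑ j ∈ Finset.Icc 1 M, Λ j = c * (2 ^ M - 1) := by
      rw [Finset.sum_congr rfl hΛ, ← Finset.mul_sum, sum_choose_Icc M hM]
    linarith
  have hpow : (0:ℝ) < 2 ^ M - 1 := by
    have : (2:ℝ) ^ 1 ≤ 2 ^ M := pow_le_pow_right₀ (by norm_num) hM
    simp at this; linarith
  have hcval : c = 1 / (2 ^ M - 1) := by
    rw [eq_div_iff (ne_of_gt hpow)]
    exact hsum2
  rw [hΛ k hk, hcval]
  ring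
end

section
/- Let M ≥ 1 and r > 0. Consider the two-player strategic game with action sets A_1 = A_2 = {1,…,M} and utilities u_n([i,j]) = r · p_{s_n}([i,j]), where p_{s_n}([i,j]) = 1 if i ≠ j and 1 − 1/C(M,i) if i = j. Then the symmetric mixed strategy profile in which both players play Λ_k = C(M,k)/(2^M − 1), k ∈ {1,…,M}, is a Nash equilibrium: for each player n and every mixed strategy s_n on {1,…,M}, the expected utility of [s_n, Λ] does not exceed that of [Λ, Λ], which equals r·(1 − 1/(2^M − 1)). -/
open Finset

/-- The mixed strategy `Λ_k = C(M,k)/(2^M − 1)` on `{1,…,M}`. -/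
noncomputable def eqMixed (M k : ℕ) : ℝ := (M.choose k : ℝ) / (2 ^ M - 1)

lemma two_pow_sub_one_pos (M : ℕ) (hM : 1 ≤ M) : (0:ℝ) < 2 ^ M - 1 := by
  have : (2:ℝ) ≤ 2 ^ M := by
    calc (2:ℝ) = 2 ^ 1 := by norm_num
    _ ≤ 2 ^ M := by
      apply pow_le_pow_right₀ (by norm_num) hM
  linarith

lemma psucc_symm (M i j : ℕ) : psucc M i j = psucc M j i := by
  unfold psucc
  by_cases h : i = j
  · subst h; simp
  · rw [if_neg h, if_neg (fun hh => h hh.symm)]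

lemma sum_eqMixed (M : ℕ) (hM : 1 ≤ M) : ∑ k ∈ Finset.Icc 1 M, eqMixed M k = 1 := by
  have hset : Finset.range (M+1) = insert 0 (Finset.Icc 1 M) := by
    ext x; simp [Finset.mem_range, Finset.mem_Icc]; omega
  have h1 : ∑ k ∈ Finset.range (M+1), (M.choose k : ℝ) = 2 ^ M := by
    have := Nat.sum_range_choose M
    calc ∑ k ∈ Finset.range (M+1), (M.choose k : ℝ)
        = ((∑ k ∈ Finset.range (M+1), M.choose k : ℕ) : ℝ) := by push_cast; ring
      _ = 2 ^ M := by rw [this]; push_cast; ring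
  have h0 : (0:ℕ) ∉ Finset.Icc 1 M := by simp
  rw [hset, Finset.sum_insert h0] at h1
  have hsum : ∑ k ∈ Finset.Icc 1 M, (M.choose k : ℝ) = 2 ^ M - 1 := by
    simp at h1; linarith
  unfold eqMixed
  rw [← Finset.sum_div, hsum]
  exact div_self (two_pow_sub_one_pos M hM).ne'

lemma key_sum (M : ℕ) (hM : 1 ≤ M) {i : ℕ} (hi : i ∈ Finset.Icc 1 M) :
    ∑ j ∈ Finset.Icc 1 M, eqMixed M j * psucc M i j = 1 - 1 / (2 ^ M - 1) := by
  have hi' : i ≤ M := (Finset.mem_Icc.mp hi).2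
  have hC : (M.choose i : ℝ) ≠ 0 := Nat.cast_ne_zero.mpr (Nat.choose_pos hi').ne'
  have hD : ((2:ℝ) ^ M - 1) ≠ 0 := (two_pow_sub_one_pos M hM).ne'
  have hcong : ∀ j ∈ Finset.Icc 1 M,
      eqMixed M j * psucc M i j
        = eqMixed M j - (if j = i then 1 / ((2:ℝ) ^ M - 1) else 0) := by
    intro j hj
    by_cases h : j = i
    · subst h
      rw [if_pos rfl]
      unfold eqMixed psucc
      rw [if_pos rfl]
      field_simp
    · rw [if_neg h]
      unfold psucc
      rw [if_neg (fun hh => h hh.symm)]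
      ring
  rw [Finset.sum_congr rfl hcong, Finset.sum_sub_distrib, sum_eqMixed M hM,
    Finset.sum_ite_eq' (Finset.Icc 1 M) i, if_pos hi]

lemma main_helper (M : ℕ) (hM : 1 ≤ M) (r : ℝ) (t : ℕ → ℝ)
    (ht : ∑ k ∈ Finset.Icc 1 M, t k = 1) :
    ∑ i ∈ Finset.Icc 1 M, ∑ j ∈ Finset.Icc 1 M,
        t i * eqMixed M j * (r * psucc M i j) = r * (1 - 1 / (2 ^ M - 1)) := by
  have : ∀ i ∈ Finset.Icc 1 M,
      ∑ j ∈ Finset.Icc 1 M, t i * eqMixed M j * (r * psucc M i j)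
        = t i * (r * (1 - 1 / (2 ^ M - 1))) := by
    intro i hi
    have : ∑ j ∈ Finset.Icc 1 M, t i * eqMixed M j * (r * psucc M i j)
        = t i * r * ∑ j ∈ Finset.Icc 1 M, eqMixed M j * psucc M i j := by
      rw [Finset.mul_sum]; apply Finset.sum_congr rfl; intro j _; ring
    rw [this, key_sum M hM hi]; ring
  rw [Finset.sum_congr rfl this, ← Finset.sum_mul, ht, one_mul]

/-- In the two-player game on actions `{1,…,M}` with utilities `u_n([i,j]) = r·p_{s_n}([i,j])`
(reward `r > 0` for success, zero cost), the symmetric mixed profile where both players play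
`Λ_k = C(M,k)/(2^M − 1)` is a Nash equilibrium: `Λ` is a probability vector, the equilibrium
expected utility of each player equals `r·(1 − 1/(2^M − 1))`, and no player can obtain a
larger expected utility by unilaterally deviating to any mixed strategy on `{1,…,M}`. -/
theorem symmetric_mixed_profile_is_nash (M : ℕ) (hM : 1 ≤ M) (r : ℝ) (hr : 0 < r) :
    (∀ k ∈ Finset.Icc 1 M, 0 ≤ eqMixed M k)
    ∧ (∑ k ∈ Finset.Icc 1 M, eqMixed M k = 1)
    ∧ (∑ i ∈ Finset.Icc 1 M, ∑ j ∈ Finset.Icc 1 M,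
          eqMixed M i * eqMixed M j * (r * psucc M i j)
        = r * (1 - 1 / (2 ^ M - 1)))
    ∧ (∑ i ∈ Finset.Icc 1 M, ∑ j ∈ Finset.Icc 1 M,
          eqMixed M i * eqMixed M j * (r * psucc M j i)
        = r * (1 - 1 / (2 ^ M - 1)))
    ∧ (∀ t : ℕ → ℝ, (∀ k ∈ Finset.Icc 1 M, 0 ≤ t k) →
        (∑ k ∈ Finset.Icc 1 M, t k = 1) →
        ∑ i ∈ Finset.Icc 1 M, ∑ j ∈ Finset.Icc 1 M,
            t i * eqMixed M j * (r * psucc M i j)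
          ≤ ∑ i ∈ Finset.Icc 1 M, ∑ j ∈ Finset.Icc 1 M,
              eqMixed M i * eqMixed M j * (r * psucc M i j))
    ∧ (∀ t : ℕ → ℝ, (∀ k ∈ Finset.Icc 1 M, 0 ≤ t k) →
        (∑ k ∈ Finset.Icc 1 M, t k = 1) →
        ∑ i ∈ Finset.Icc 1 M, ∑ j ∈ Finset.Icc 1 M,
            eqMixed M i * t j * (r * psucc M j i)
          ≤ ∑ i ∈ Finset.Icc 1 M, ∑ j ∈ Finset.Icc 1 M,
              eqMixed M i * eqMixed M j * (r * psucc M j i)) := by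
  have hsymm : ∀ s : ℕ → ℝ,
      ∑ i ∈ Finset.Icc 1 M, ∑ j ∈ Finset.Icc 1 M,
          eqMixed M i * s j * (r * psucc M j i)
        = ∑ i ∈ Finset.Icc 1 M, ∑ j ∈ Finset.Icc 1 M,
            s i * eqMixed M j * (r * psucc M i j) := by
    intro s
    rw [Finset.sum_comm]
    apply Finset.sum_congr rfl; intro i _
    apply Finset.sum_congr rfl; intro j _
    rw [psucc_symm M i j]; ring
  have heq := main_helper M hM r (eqMixed M) (sum_eqMixed M hM)
  refine ⟨?_, sum_eqMixed M hM, heq, ?_, ?_, ?_⟩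
  · intro k _
    unfold eqMixed
    exact div_nonneg (Nat.cast_nonneg _) (two_pow_sub_one_pos M hM).le
  · rw [hsymm (eqMixed M)]; exact heq
  · intro t _ ht1
    rw [main_helper M hM r t ht1, heq]
  · intro t _ ht1
    rw [hsymm t, hsymm (eqMixed M), main_helper M hM r t ht1, heq]
end
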